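/- arXiv:0907.4488 — 4 statements merged into one kernel-verified Lean document; each statement's English description precedes it below -/
import Mathlib

section
/- Let B be a positive integer and let G = (V, E) be a finite simple graph with m edges in which every vertex has degree at most B. Then G has a vertex cover C with B·|C| = m if and only if G is bipartite, i.e. V can be partitioned into two independent sets A and V∖A, with B·|A| = m (that is, some bipartition class has size exactly m/B). -/
/-!
Count, for each edge, its endpoints in a vertex cover `C`: the total is `∑_{v ∈ C} deg v`,
which is at most `B·|C| = m`, while every one of the `m` edges contributes at least one.
Hence every edge has exactly one endpoint in `C`, i.e. `C` is independent; its complement is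
independent because `C` is a cover. Conversely, the complement of an independent set is a cover.
-/

open Finset

namespace SimpleGraph

variable {V : Type*} {G : SimpleGraph V}

theorem isIndepSet_iff_forall_not_adj {s : Set V} :
    G.IsIndepSet s ↔ ∀ u ∈ s, ∀ v ∈ s, ¬ G.Adj u v :=
  ⟨fun h _ hu _ hv huv => h hu hv huv.ne huv, fun h _ hu _ hv _ => h _ hu _ hv⟩

variable [Fintype V] [DecidableEq V] [DecidableRel G.Adj]

theorem sum_card_filter_mem_edgeFinset_eq_sum_degree (C : Finset V) :
    ∑ e ∈ G.edgeFinset, #{v ∈ C | v ∈ e} = ∑ v ∈ C, G.degree v := by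
  simp only [card_filter]
  rw [sum_comm]
  refine sum_congr rfl fun v _ => ?_
  rw [← card_filter, ← G.incidenceFinset_eq_filter v, G.card_incidenceFinset_eq_degree]

theorem IsVertexCover.isIndepSet_of_sum_degree_le {C : Finset V} (hC : G.IsVertexCover C)
    (hdeg : ∑ v ∈ C, G.degree v ≤ #G.edgeFinset) : G.IsIndepSet C := by
  rw [isIndepSet_iff_forall_not_adj]
  intro u hu v hv huv
  have hcovered : ∀ e ∈ G.edgeFinset, 1 ≤ #{w ∈ C | w ∈ e} := by
    rintro ⟨x, y⟩ hxy
    obtain hx | hy := hC (mem_edgeFinset.1 hxy)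
    · exact card_pos.2 ⟨x, mem_filter.2 ⟨hx, Sym2.mem_mk_left x y⟩⟩
    · exact card_pos.2 ⟨y, mem_filter.2 ⟨hy, Sym2.mem_mk_right x y⟩⟩
  have hdouble : 1 < #{w ∈ C | w ∈ s(u, v)} :=
    one_lt_card.2 ⟨u, mem_filter.2 ⟨hu, Sym2.mem_mk_left u v⟩,
      v, mem_filter.2 ⟨hv, Sym2.mem_mk_right u v⟩, huv.ne⟩
  have : #G.edgeFinset < ∑ v ∈ C, G.degree v := by
    rw [← sum_card_filter_mem_edgeFinset_eq_sum_degree, card_eq_sum_ones]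
    exact sum_lt_sum hcovered ⟨s(u, v), mem_edgeFinset.2 huv, hdouble⟩
  omega

end SimpleGraph

open SimpleGraph in
theorem stmt_0_general {V : Type*} [Fintype V] [DecidableEq V] (G : SimpleGraph V)
    [DecidableRel G.Adj] (B : ℕ) (hdeg : ∀ v : V, G.degree v ≤ B) :
    (∃ C : Finset V, (∀ ⦃u v : V⦄, G.Adj u v → u ∈ C ∨ v ∈ C) ∧
        B * C.card = G.edgeFinset.card)
    ↔ (∃ A : Finset V, (∀ u ∈ A, ∀ v ∈ A, ¬ G.Adj u v) ∧
        (∀ u ∈ Aᶜ, ∀ v ∈ Aᶜ, ¬ G.Adj u v) ∧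
        B * A.card = G.edgeFinset.card) := by
  constructor
  · rintro ⟨C, hcover, hcard⟩
    have hC : G.IsVertexCover C := hcover
    have hsum : ∑ v ∈ C, G.degree v ≤ #G.edgeFinset := by
      simpa [hcard, mul_comm] using sum_le_card_nsmul C (fun v => G.degree v) B fun v _ => hdeg v
    have hcompl : G.IsIndepSet ↑Cᶜ := by
      rw [coe_compl]; exact isIndepSet_compl_iff_isVertexCover.2 hC
    exact ⟨C, isIndepSet_iff_forall_not_adj.1 (hC.isIndepSet_of_sum_degree_le hsum),
      isIndepSet_iff_forall_not_adj.1 hcompl, hcard⟩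
  · rintro ⟨A, -, hcompl, hcard⟩
    have hA : G.IsVertexCover A := isIndepSet_compl_iff_isVertexCover.1 <| by
      rw [← coe_compl]; exact isIndepSet_iff_forall_not_adj.2 hcompl
    exact ⟨A, hA, hcard⟩

/-- Let B be a positive integer and let G = (V, E) be a finite simple graph
with m edges in which every vertex has degree at most B. Then G has a vertex cover C with
B·|C| = m if and only if G is bipartite, i.e. V can be partitioned into two independent sets
A and V∖A, with B·|A| = m. -/
theorem stmt_0 {V : Type*} [Fintype V] [DecidableEq V] (G : SimpleGraph V)
    [DecidableRel G.Adj] (B : ℕ) (hB : 0 < B) (hdeg : ∀ v : V, G.degree v ≤ B) :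
    (∃ C : Finset V, (∀ ⦃u v : V⦄, G.Adj u v → u ∈ C ∨ v ∈ C) ∧
        B * C.card = G.edgeFinset.card)
    ↔ (∃ A : Finset V, (∀ u ∈ A, ∀ v ∈ A, ¬ G.Adj u v) ∧
        (∀ u ∈ Aᶜ, ∀ v ∈ Aᶜ, ¬ G.Adj u v) ∧
        B * A.card = G.edgeFinset.card) :=
  stmt_0_general G B hdeg
end

section
/- Let B and k be positive integers and let G = (V, E) be a finite simple graph with m edges in which every vertex has degree at most B. If G has a vertex cover of size at most m/B + k, then there exists a set D ⊆ E with |D| ≤ kB such that the graph G − D obtained by deleting the edges of D from G is bipartite. -/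
/-!
Let `C` be the given vertex cover and let `D` be the set of edges with both ends in `C`. Every edge
outside `D` has exactly one end in `C`, so `G - D` is bipartite with sides `C` and `V ∖ C`.
Counting the incidences between `C` and the edges, every edge is counted at least once and every
edge of `D` twice, so `m + |D| ≤ ∑_{v ∈ C} deg v ≤ |C| B ≤ m + k B`.
-/

open Finset

namespace SimpleGraph

variable {V : Type*} [Fintype V] [DecidableEq V] (G : SimpleGraph V) [DecidableRel G.Adj]

def edgeFinsetWithin (s : Finset V) : Finset (Sym2 V) :=
  {e ∈ G.edgeFinset | ∀ v ∈ e, v ∈ s}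

theorem edgeFinsetWithin_subset_edgeSet (s : Finset V) :
    (G.edgeFinsetWithin s : Set (Sym2 V)) ⊆ G.edgeSet := by
  rw [← coe_edgeFinset, coe_subset]
  exact filter_subset _ _

theorem sum_degree_eq_sum_card_filter_mem (s : Finset V) :
    ∑ v ∈ s, G.degree v = ∑ e ∈ G.edgeFinset, #{v ∈ s | v ∈ e} := by
  simp_rw [← card_incidenceFinset_eq_degree, incidenceFinset_eq_filter]
  exact sum_card_bipartiteAbove_eq_sum_card_bipartiteBelow _

variable {G} {s : Finset V}

theorem IsVertexCover.one_add_ite_le_card_filter_mem (hs : G.IsVertexCover s) {e : Sym2 V}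
    (he : e ∈ G.edgeFinset) :
    1 + (if ∀ v ∈ e, v ∈ s then 1 else 0) ≤ #{v ∈ s | v ∈ e} := by
  induction e with
  | h u v =>
    have huv : G.Adj u v := mem_edgeFinset.mp he
    split_ifs with hin
    · calc 1 + 1 = #({u, v} : Finset V) := (card_pair huv.ne).symm
        _ ≤ _ := card_le_card fun w hw => by
          have hw : w ∈ s(u, v) := by simpa using hw
          exact mem_filter.mpr ⟨hin w hw, hw⟩
    · obtain ⟨w, hws, hw⟩ : ∃ w ∈ s, w ∈ s(u, v) := by
        rcases hs huv with h | h
        exacts [⟨u, h, Sym2.mem_mk_left u v⟩, ⟨v, h, Sym2.mem_mk_right u v⟩]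
      exact card_pos.mpr ⟨w, mem_filter.mpr ⟨hws, hw⟩⟩

theorem IsVertexCover.card_edgeFinset_add_card_edgeFinsetWithin_le (hs : G.IsVertexCover s) :
    #G.edgeFinset + #(G.edgeFinsetWithin s) ≤ ∑ v ∈ s, G.degree v := by
  rw [sum_degree_eq_sum_card_filter_mem, edgeFinsetWithin, card_filter, card_eq_sum_ones,
    ← sum_add_distrib]
  exact sum_le_sum fun e he => hs.one_add_ite_le_card_filter_mem he

theorem IsVertexCover.mem_iff_notMem_of_adj_deleteEdges (hs : G.IsVertexCover s) {u v : V}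
    (h : (G.deleteEdges (G.edgeFinsetWithin s)).Adj u v) : u ∈ s ↔ v ∉ s := by
  obtain ⟨huv, hD⟩ := (deleteEdges_adj ..).mp h
  have : ¬(u ∈ s ∧ v ∈ s) := fun ⟨hu, hv⟩ =>
    hD (mem_filter.mpr ⟨mem_edgeFinset.mpr huv, by simp [hu, hv]⟩)
  have := hs huv
  tauto

end SimpleGraph

theorem stmt_2_general {V : Type*} [Fintype V] [DecidableEq V] (G : SimpleGraph V)
    [DecidableRel G.Adj] (B k : ℕ) (hB : 0 < B)
    (hdeg : ∀ v : V, G.degree v ≤ B)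
    (hcover : ∃ C : Finset V, (∀ ⦃u v : V⦄, G.Adj u v → u ∈ C ∨ v ∈ C) ∧
      (C.card : ℚ) ≤ (G.edgeFinset.card : ℚ) / B + k) :
    ∃ D : Finset (Sym2 V), ↑D ⊆ G.edgeSet ∧ D.card ≤ k * B ∧
      ∃ A : Set V, ∀ ⦃u v : V⦄, (G.deleteEdges ↑D).Adj u v → (u ∈ A ↔ v ∉ A) := by
  obtain ⟨C, hC, hCcard⟩ := hcover
  have hC : G.IsVertexCover C := hC
  have hcount : #G.edgeFinset + #(G.edgeFinsetWithin C) ≤ #C * B :=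
    hC.card_edgeFinset_add_card_edgeFinsetWithin_le.trans
      (by simpa using sum_le_card_nsmul C _ B fun v _ => hdeg v)
  have hCB : (#C : ℚ) * B ≤ #G.edgeFinset + k * B :=
    calc (#C : ℚ) * B ≤ ((#G.edgeFinset : ℚ) / B + k) * B := by gcongr
      _ = #G.edgeFinset + k * B := by field_simp
  refine ⟨G.edgeFinsetWithin C, G.edgeFinsetWithin_subset_edgeSet C, ?_, C,
    fun u v h => hC.mem_iff_notMem_of_adj_deleteEdges h⟩
  have hcount' : (#G.edgeFinset : ℚ) + #(G.edgeFinsetWithin C) ≤ #C * B := by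
    exact_mod_cast hcount
  exact_mod_cast (by linarith : (#(G.edgeFinsetWithin C) : ℚ) ≤ k * B)

/-- If a finite simple graph G with m edges and maximum degree at most B has a
vertex cover of size at most m/B + k, then there exists a set D of at most kB edges whose
deletion from G leaves a bipartite graph. -/
theorem stmt_2 {V : Type*} [Fintype V] [DecidableEq V] (G : SimpleGraph V)
    [DecidableRel G.Adj] (B k : ℕ) (hB : 0 < B) (hk : 0 < k)
    (hdeg : ∀ v : V, G.degree v ≤ B)
    (hcover : ∃ C : Finset V, (∀ ⦃u v : V⦄, G.Adj u v → u ∈ C ∨ v ∈ C) ∧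
      (C.card : ℚ) ≤ (G.edgeFinset.card : ℚ) / B + k) :
    ∃ D : Finset (Sym2 V), ↑D ⊆ G.edgeSet ∧ D.card ≤ k * B ∧
      ∃ A : Set V, ∀ ⦃u v : V⦄, (G.deleteEdges ↑D).Adj u v → (u ∈ A ↔ v ∉ A) :=
  stmt_2_general G B k hB hdeg hcover
end

section
/- Let G = (V, E) be a finite simple graph and let D ⊆ E. Then the minimum size of a vertex cover of G equals the minimum, over all minimal vertex covers C′ of the graph G[D] (the subgraph of G whose edge set is D and whose vertex set is the set of endpoints of edges in D), of |C′| plus the minimum size of a vertex cover of the graph G − C′ obtained from G by deleting the vertices of C′. -/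
/-- A vertex cover of a simple graph: a set of vertices meeting every edge. -/
def IsVertexCover {V : Type*} (G : SimpleGraph V) (C : Set V) : Prop :=
  ∀ ⦃u v : V⦄, G.Adj u v → u ∈ C ∨ v ∈ C

/-- The minimum size of a vertex cover of `G`. -/
noncomputable def minVertexCover {V : Type*} (G : SimpleGraph V) : ℕ :=
  sInf {n : ℕ | ∃ C : Set V, IsVertexCover G C ∧ C.ncard = n}

/-- A minimal vertex cover: a vertex cover no proper subset of which is a vertex cover. -/
def IsMinimalVertexCover {V : Type*} (G : SimpleGraph V) (C : Set V) : Prop :=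
  IsVertexCover G C ∧ ∀ C' ⊆ C, IsVertexCover G C' → C' = C

/-- The subgraph `G[D]` of `G` whose edge set is `D` (its edges are the edges of `G`
belonging to `D`; vertices outside edges of `D` are isolated). -/
def edgeSubgraph {V : Type*} (G : SimpleGraph V) (D : Set (Sym2 V)) : SimpleGraph V where
  Adj u v := G.Adj u v ∧ s(u, v) ∈ D
  symm := by
    constructor
    intro u v h
    exact ⟨h.1.symm, by rw [Sym2.eq_swap]; exact h.2⟩
  loopless := by
    constructor
    intro u h
    exact G.irrefl h.1

/-- The minimum size of a vertex cover of the graph `G − C'` obtained from `G` by deleting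
the vertices of `C'` together with all incident edges. -/
noncomputable def minVertexCoverDel {V : Type*} (G : SimpleGraph V) (C' : Set V) : ℕ :=
  sInf {n : ℕ | ∃ C : Set V, C ⊆ C'ᶜ ∧
    (∀ ⦃u v : V⦄, G.Adj u v → u ∉ C' → v ∉ C' → u ∈ C ∨ v ∈ C) ∧ C.ncard = n}

/-!
Removing a minimal cover `C'` of `G[D]` and covering the rest of `G` separately always
yields a cover of `G`, so the right-hand side is at least the vertex cover number. Conversely a
minimum cover `C` of `G` covers `G[D]`, hence contains a minimal cover `C'` of `G[D]`, and
`C \ C'` covers `G − C'`; this splits `|C|` as `|C'| + |C \ C'|`.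
-/

section VertexCover

variable {V : Type*} {G H : SimpleGraph V} {C C' : Set V}

theorem IsVertexCover.anti (hHG : H ≤ G) (hC : IsVertexCover G C) : IsVertexCover H C :=
  fun _ _ huv => hC (hHG huv)

theorem edgeSubgraph_le (G : SimpleGraph V) (D : Set (Sym2 V)) : edgeSubgraph G D ≤ G :=
  fun _ _ huv => huv.1

theorem IsVertexCover.exists_isMinimalVertexCover_subset [Finite V] (hC : IsVertexCover G C) :
    ∃ C' ⊆ C, IsMinimalVertexCover G C' := by
  obtain ⟨C', hC'C, hmin⟩ :=
    (Set.toFinite {C : Set V | IsVertexCover G C}).exists_le_minimal hC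
  exact ⟨C', hC'C, hmin.prop, fun C'' hC''C' hC'' => le_antisymm hC''C' (hmin.2 hC'' hC''C')⟩

theorem minVertexCover_le_ncard (hC : IsVertexCover G C) : minVertexCover G ≤ C.ncard :=
  Nat.sInf_le ⟨C, hC, rfl⟩

theorem exists_isVertexCover_ncard_eq_minVertexCover (G : SimpleGraph V) :
    ∃ C, IsVertexCover G C ∧ C.ncard = minVertexCover G :=
  Nat.sInf_mem (s := {n | ∃ C : Set V, IsVertexCover G C ∧ C.ncard = n})
    ⟨_, Set.univ, fun u _ _ => Or.inl (Set.mem_univ u), rfl⟩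

theorem minVertexCoverDel_le_ncard (hCC' : C ⊆ C'ᶜ)
    (hC : ∀ ⦃u v : V⦄, G.Adj u v → u ∉ C' → v ∉ C' → u ∈ C ∨ v ∈ C) :
    minVertexCoverDel G C' ≤ C.ncard :=
  Nat.sInf_le ⟨C, hCC', hC, rfl⟩

theorem exists_ncard_eq_minVertexCoverDel (G : SimpleGraph V) (C' : Set V) :
    ∃ C ⊆ C'ᶜ, (∀ ⦃u v : V⦄, G.Adj u v → u ∉ C' → v ∉ C' → u ∈ C ∨ v ∈ C) ∧
      C.ncard = minVertexCoverDel G C' :=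
  Nat.sInf_mem (s := {n | ∃ C : Set V, C ⊆ C'ᶜ ∧
      (∀ ⦃u v : V⦄, G.Adj u v → u ∉ C' → v ∉ C' → u ∈ C ∨ v ∈ C) ∧ C.ncard = n})
    ⟨_, C'ᶜ, subset_rfl, fun _ _ _ hu _ => Or.inl hu, rfl⟩

theorem minVertexCover_le_ncard_add_minVertexCoverDel (G : SimpleGraph V)
    (C' : Set V) : minVertexCover G ≤ C'.ncard + minVertexCoverDel G C' := by
  obtain ⟨C, -, hC, hCcard⟩ := exists_ncard_eq_minVertexCoverDel G C'
  have hcover : IsVertexCover G (C' ∪ C) := by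
    intro u v huv
    by_cases hu : u ∈ C'
    · exact Or.inl (Or.inl hu)
    by_cases hv : v ∈ C'
    · exact Or.inr (Or.inl hv)
    exact (hC huv hu hv).imp Or.inr Or.inr
  calc minVertexCover G ≤ (C' ∪ C).ncard := minVertexCover_le_ncard hcover
    _ ≤ C'.ncard + C.ncard := Set.ncard_union_le _ _
    _ = C'.ncard + minVertexCoverDel G C' := by rw [hCcard]

theorem ncard_add_minVertexCoverDel_le [Finite V] (hC : IsVertexCover G C) (hC'C : C' ⊆ C) :
    C'.ncard + minVertexCoverDel G C' ≤ C.ncard := by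
  have hdel : minVertexCoverDel G C' ≤ (C \ C').ncard := by
    refine minVertexCoverDel_le_ncard (fun _ hx => hx.2) fun u v huv hu hv => ?_
    exact (hC huv).imp (fun h => ⟨h, hu⟩) (fun h => ⟨h, hv⟩)
  have hsplit : (C \ C').ncard + C'.ncard = C.ncard := Set.ncard_sdiff_add_ncard_of_subset hC'C
  omega

end VertexCover

theorem stmt_7_general {V : Type*} [Fintype V] (G : SimpleGraph V)
    (D : Set (Sym2 V)) :
    minVertexCover G =
      sInf {n : ℕ | ∃ C' : Set V, IsMinimalVertexCover (edgeSubgraph G D) C' ∧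
        n = C'.ncard + minVertexCoverDel G C'} := by
  refine (IsLeast.csInf_eq ⟨?_, ?_⟩).symm
  · obtain ⟨C, hC, hCcard⟩ := exists_isVertexCover_ncard_eq_minVertexCover G
    obtain ⟨C', hC'C, hC'⟩ :=
      (hC.anti (edgeSubgraph_le G D)).exists_isMinimalVertexCover_subset
    refine ⟨C', hC', le_antisymm (minVertexCover_le_ncard_add_minVertexCoverDel G C') ?_⟩
    exact hCcard ▸ ncard_add_minVertexCoverDel_le hC hC'C
  · rintro _ ⟨C', -, rfl⟩
    exact minVertexCover_le_ncard_add_minVertexCoverDel G C'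

/-- The minimum size of a vertex cover of G equals the minimum, over all
minimal vertex covers C′ of G[D], of |C′| plus the minimum size of a vertex cover of
G − C′. -/
theorem stmt_7 {V : Type*} [Fintype V] (G : SimpleGraph V)
    (D : Set (Sym2 V)) (hD : D ⊆ G.edgeSet) :
    minVertexCover G =
      sInf {n : ℕ | ∃ C' : Set V, IsMinimalVertexCover (edgeSubgraph G D) C' ∧
        n = C'.ncard + minVertexCoverDel G C'} :=
  stmt_7_general G D
end

section
/- Let B and k be positive integers and let G = (V, E) be a finite simple graph on n vertices with maximum degree at most B. Let G′ = (V′, E′) be the graph constructed from G as follows: for every vertex v ∈ V take a choice gadget that is a complete bipartite graph K_{B+1,B+2} (with a smaller side of B+1 vertices and a larger side of B+2 vertices); for every vertex v ∈ V take a domination gadget consisting of a vertex v_d together with B − d(v) + 1 pendant leaves attached to v_d, where d(v) is the degree of v in G; and for every vertex v ∈ V and every u in the closed neighborhood N[v] of v in G, add one edge from a distinct vertex of the larger side of v's choice gadget to the vertex u_d. Assign capacities: every vertex of G′ has capacity equal to its degree in G′, except each vertex v_d, which has capacity B+1. If G has a dominating set of size at most k, then G′ has a capacitated vertex cover of size at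 most n(B+2) + k. -/
/-- The vertex set of the gadget graph `G′` built from a graph on `V` with degree
function `d` and parameter `B`:
* `Sum.inl (v, Sum.inl i)` — the `i`-th vertex of the smaller side (size `B+1`) of the
  choice gadget of `v`;
* `Sum.inl (v, Sum.inr j)` — the `j`-th vertex of the larger side (size `B+2`) of the
  choice gadget of `v`;
* `Sum.inr (Sum.inl v)` — the vertex `v_d` of the domination gadget of `v`;
* `Sum.inr (Sum.inr ⟨v, l⟩)` — the `l`-th of the `B − d(v) + 1` pendant leaves attached
  to `v_d`. -/
abbrev GadgetVert (V : Type*) (B : ℕ) (d : V → ℕ) : Type _ :=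
  (V × (Fin (B + 1) ⊕ Fin (B + 2))) ⊕ (V ⊕ (Σ v : V, Fin (B - d v + 1)))

/-- The generating relation of the gadget graph: each choice gadget is a complete bipartite
graph `K_{B+1,B+2}`; for every `v` and every `u` in the closed neighborhood of `v`, the
vertex `ι v u` of the larger side of `v`'s choice gadget is joined to `u_d`; each leaf
`⟨v, l⟩` is joined to `v_d`. -/
def gadgetRel {V : Type*} (G : SimpleGraph V) (B : ℕ) (d : V → ℕ)
    (ι : V → V → Fin (B + 2)) :
    GadgetVert V B d → GadgetVert V B d → Prop
  | Sum.inl (v, Sum.inl _), Sum.inl (w, Sum.inr _) => v = w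
  | Sum.inl (v, Sum.inr j), Sum.inr (Sum.inl u) => (G.Adj v u ∨ u = v) ∧ ι v u = j
  | Sum.inr (Sum.inl v), Sum.inr (Sum.inr ⟨w, _⟩) => v = w
  | _, _ => False

/-- The gadget graph `G′` constructed from `G`. -/
def gadgetGraph {V : Type*} (G : SimpleGraph V) (B : ℕ) (d : V → ℕ)
    (ι : V → V → Fin (B + 2)) : SimpleGraph (GadgetVert V B d) :=
  SimpleGraph.fromRel (gadgetRel G B d ι)

/-- The capacity function on the gadget graph: each vertex `v_d` has capacity `B + 1`;
every other vertex has capacity equal to its degree in the gadget graph. -/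
noncomputable def gadgetCap {V : Type*} (G : SimpleGraph V) (B : ℕ) (d : V → ℕ)
    (ι : V → V → Fin (B + 2)) : GadgetVert V B d → ℕ
  | Sum.inr (Sum.inl _) => B + 1
  | w => ((gadgetGraph G B d ι).neighborSet w).ncard

/-- A capacitated vertex cover of a graph `H` with capacities `c`: a vertex set `C`
together with an assignment of every edge of `H` to one of its endpoints lying in `C`,
such that every vertex `w ∈ C` is assigned at most `c w` edges. -/
def IsCapacitatedVertexCover {W : Type*} (H : SimpleGraph W) (c : W → ℕ) (C : Set W) : Prop :=
  ∃ f : Sym2 W → W, (∀ e ∈ H.edgeSet, f e ∈ e ∧ f e ∈ C) ∧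
    ∀ w ∈ C, {e | e ∈ H.edgeSet ∧ f e = w}.ncard ≤ c w

/-!
In every choice gadget take the larger side when `v ∈ S` and the smaller side otherwise, and
take all centres `v_d`; this has `n (B + 1) + |S| + n` vertices. Each edge goes to an endpoint
in a choice gadget if one lies in the cover, and otherwise to its centre. Choice vertices then
stay within capacity, which is their degree. A centre `u_d` receives its `B - d(u) + 1` leaf
edges and the edges coming from `N[u] \ S`, of which there are at most `d(u)` because `S`
dominates `u`.
-/

theorem SimpleGraph.ncard_neighborSet_eq_degree {V : Type*} [Fintype V] (G : SimpleGraph V)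
    [DecidableRel G.Adj] (u : V) : (G.neighborSet u).ncard = G.degree u := by
  rw [Set.ncard_eq_toFinset_card', ← SimpleGraph.card_neighborSet_eq_degree, Set.toFinset_card]

theorem SimpleGraph.ncard_insert_neighborSet_diff_le {V : Type*} [Fintype V]
    {G : SimpleGraph V} [DecidableRel G.Adj] {S : Set V} {u : V}
    (hS : ∃ s ∈ S, s = u ∨ G.Adj s u) : (insert u (G.neighborSet u) \ S).ncard ≤ G.degree u := by
  obtain ⟨s, hsS, hsu⟩ := hS
  have hs : s ∈ insert u (G.neighborSet u) := hsu.imp_right SimpleGraph.Adj.symm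
  have hlt : (insert u (G.neighborSet u) \ S).ncard < (insert u (G.neighborSet u)).ncard :=
    Set.ncard_lt_ncard ((Set.ssubset_iff_of_subset Set.sdiff_subset).mpr ⟨s, hs, fun h => h.2 hsS⟩)
  rw [Set.ncard_insert_of_notMem G.notMem_neighborSet_self,
    G.ncard_neighborSet_eq_degree] at hlt
  omega

section CapacitatedVertexCover

variable {W : Type*} [Finite W] (H : SimpleGraph W)

theorem SimpleGraph.ncard_assigned_le (f : Sym2 W → W) (hf : ∀ e ∈ H.edgeSet, f e ∈ e) (w : W)
    (P : W → Prop) (hP : ∀ x, H.Adj w x → f s(w, x) = w → P x) :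
    {e | e ∈ H.edgeSet ∧ f e = w}.ncard ≤ {x | H.Adj w x ∧ P x}.ncard := by
  have hsub : {e | e ∈ H.edgeSet ∧ f e = w} ⊆ (fun x => s(w, x)) '' {x | H.Adj w x ∧ P x} := by
    rintro e ⟨he, hfe⟩
    obtain ⟨x, rfl⟩ := Sym2.mem_iff_exists.mp (hfe ▸ hf e he)
    exact ⟨x, ⟨he, hP x he hfe⟩, rfl⟩
  exact (Set.ncard_le_ncard hsub (Set.toFinite _)).trans (Set.ncard_image_le (Set.toFinite _))

open Classical in
theorem isCapacitatedVertexCover_union (c : W → ℕ) (A T : Set W)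
    (hcover : ∀ a b, H.Adj a b → a ∈ A ∪ T ∨ b ∈ A ∪ T)
    (hA : ∀ a ∈ A, (H.neighborSet a).ncard ≤ c a)
    (hT : ∀ t ∈ T, {x | H.Adj t x ∧ x ∉ A}.ncard ≤ c t) :
    IsCapacitatedVertexCover H c (A ∪ T) := by
  let f : Sym2 W → W := fun e =>
    if h : ∃ a ∈ e, a ∈ A then h.choose
    else if h' : ∃ a ∈ e, a ∈ A ∪ T then h'.choose else e.out.1
  have hf : ∀ e ∈ H.edgeSet, f e ∈ e ∧ f e ∈ A ∪ T := by
    intro e he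
    have hex : ∃ a ∈ e, a ∈ A ∪ T := by
      induction e using Sym2.ind with
      | _ a b =>
        exact (hcover a b he).elim (⟨a, Sym2.mem_mk_left a b, ·⟩) (⟨b, Sym2.mem_mk_right a b, ·⟩)
    simp only [f]
    split_ifs with h
    · exact ⟨h.choose_spec.1, Or.inl h.choose_spec.2⟩
    · exact hex.choose_spec
  have hf_notMem : ∀ e, f e ∉ A → ∀ a ∈ e, a ∉ A := by
    intro e hfe a hae haA
    simp only [f, dif_pos (⟨a, hae, haA⟩ : ∃ a ∈ e, a ∈ A)] at hfe
    exact hfe (Exists.choose_spec (⟨a, hae, haA⟩ : ∃ a ∈ e, a ∈ A)).2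
  refine ⟨f, hf, fun w hw => ?_⟩
  have hfe : ∀ e ∈ H.edgeSet, f e ∈ e := fun e he => (hf e he).1
  by_cases hwA : w ∈ A
  · calc _ ≤ {x | H.Adj w x ∧ True}.ncard := H.ncard_assigned_le f hfe w _ fun _ _ _ => trivial
      _ ≤ (H.neighborSet w).ncard := Set.ncard_le_ncard (fun x hx => hx.1)
      _ ≤ c w := hA w hwA
  · refine (H.ncard_assigned_le f hfe w (· ∉ A) fun x _ hx => ?_).trans
      (hT w (hw.resolve_left hwA))
    exact hf_notMem _ (by rwa [hx]) x (Sym2.mem_mk_right w x)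

end CapacitatedVertexCover

section Gadget

variable {V : Type*} {G : SimpleGraph V} {B : ℕ} {d : V → ℕ} {ι : V → V → Fin (B + 2)}

theorem gadgetGraph_adj_induction {P : GadgetVert V B d → GadgetVert V B d → Prop}
    (symm : ∀ a b, P a b → P b a)
    (choice : ∀ v i j, P (Sum.inl (v, Sum.inl i)) (Sum.inl (v, Sum.inr j)))
    (cross : ∀ v u, G.Adj v u ∨ u = v → P (Sum.inl (v, Sum.inr (ι v u))) (Sum.inr (Sum.inl u)))
    (leaf : ∀ v l, P (Sum.inr (Sum.inl v)) (Sum.inr (Sum.inr ⟨v, l⟩)))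
    {a b : GadgetVert V B d} (h : (gadgetGraph G B d ι).Adj a b) : P a b := by
  have of_rel : ∀ a b, gadgetRel G B d ι a b → P a b := by
    intro a b hab
    rcases a with ⟨v, i | j⟩ | (v | ⟨v, l⟩) <;>
      rcases b with ⟨w, i' | j'⟩ | (w | ⟨w, l'⟩) <;> simp only [gadgetRel] at hab
    · obtain rfl := hab
      exact choice v i j'
    · obtain ⟨hvw, rfl⟩ := hab
      exact cross v w hvw
    · obtain rfl := hab
      exact leaf v l'
  rw [gadgetGraph, SimpleGraph.fromRel_adj] at h
  exact h.2.elim (of_rel a b) (symm b a <| of_rel b a ·)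

theorem gadgetCap_inl (x : V × (Fin (B + 1) ⊕ Fin (B + 2))) :
    gadgetCap G B d ι (Sum.inl x) = ((gadgetGraph G B d ι).neighborSet (Sum.inl x)).ncard :=
  rfl

def choiceCover (S : Set V) : Set (GadgetVert V B d) :=
  (fun p : V × Fin (B + 1) => Sum.inl (p.1, Sum.inl p.2)) '' (Sᶜ ×ˢ Set.univ) ∪
    (fun p : V × Fin (B + 2) => Sum.inl (p.1, Sum.inr p.2)) '' (S ×ˢ Set.univ)

def dominationCenters : Set (GadgetVert V B d) :=
  Set.range fun v => Sum.inr (Sum.inl v)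

variable {S : Set V}

@[simp]
theorem inl_inl_mem_choiceCover {v : V} {i : Fin (B + 1)} :
    (Sum.inl (v, Sum.inl i) : GadgetVert V B d) ∈ choiceCover S ↔ v ∉ S := by
  simp [choiceCover]

@[simp]
theorem inl_inr_mem_choiceCover {v : V} {j : Fin (B + 2)} :
    (Sum.inl (v, Sum.inr j) : GadgetVert V B d) ∈ choiceCover S ↔ v ∈ S := by
  simp [choiceCover]

@[simp]
theorem inr_notMem_choiceCover {x : V ⊕ (Σ v : V, Fin (B - d v + 1))} :
    (Sum.inr x : GadgetVert V B d) ∉ choiceCover S := by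
  simp [choiceCover]

theorem gadgetGraph_adj_mem_cover {a b : GadgetVert V B d} (h : (gadgetGraph G B d ι).Adj a b) :
    a ∈ choiceCover S ∪ dominationCenters ∨ b ∈ choiceCover S ∪ dominationCenters := by
  refine gadgetGraph_adj_induction (P := fun a b => a ∈ choiceCover S ∪ dominationCenters ∨
    b ∈ choiceCover S ∪ dominationCenters) (fun _ _ => Or.symm) (fun v _ _ => ?_) (fun _ _ _ => ?_)
    (fun _ _ => ?_) h
  · by_cases hv : v ∈ S <;> simp [hv]
  · simp [dominationCenters]
  · simp [dominationCenters]

theorem ncard_choiceCover_le [Finite V] (S : Set V) :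
    (choiceCover S : Set (GadgetVert V B d)).ncard ≤ Nat.card V * (B + 1) + S.ncard :=
  calc (choiceCover S : Set (GadgetVert V B d)).ncard
      ≤ (Sᶜ ×ˢ (Set.univ : Set (Fin (B + 1)))).ncard +
          (S ×ˢ (Set.univ : Set (Fin (B + 2)))).ncard :=
        (Set.ncard_union_le _ _).trans (add_le_add (Set.ncard_image_le) (Set.ncard_image_le))
    _ = Sᶜ.ncard * (B + 1) + S.ncard * (B + 2) := by simp [Set.ncard_prod, Set.ncard_univ]
    _ = Nat.card V * (B + 1) + S.ncard := by rw [← Set.ncard_add_ncard_compl S]; ring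

theorem ncard_dominationCenters [Finite V] :
    (dominationCenters : Set (GadgetVert V B d)).ncard = Nat.card V :=
  Set.ncard_range_of_injective fun _ _ h => by simpa using h

theorem ncard_adj_notMem_choiceCover_le [Fintype V] [DecidableRel G.Adj] {u : V}
    (hdeg : G.degree u ≤ B) (hS : ∃ s ∈ S, s = u ∨ G.Adj s u) :
    {x | (gadgetGraph G B (fun v => G.degree v) ι).Adj (Sum.inr (Sum.inl u)) x ∧
      x ∉ choiceCover S}.ncard ≤ B + 1 := by
  set cross := (fun v => (Sum.inl (v, Sum.inr (ι v u)) : GadgetVert V B (fun v => G.degree v))) ''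
    (insert u (G.neighborSet u) \ S)
  set leaves := Set.range fun l : Fin (B - G.degree u + 1) =>
    (Sum.inr (Sum.inr ⟨u, l⟩) : GadgetVert V B (fun v => G.degree v))
  have hsub : {x | (gadgetGraph G B (fun v => G.degree v) ι).Adj (Sum.inr (Sum.inl u)) x ∧
      x ∉ choiceCover S} ⊆ cross ∪ leaves := by
    rintro (⟨v, i | j⟩ | (v | ⟨v, l⟩)) ⟨hx, hxS⟩ <;>
      simp [gadgetGraph, gadgetRel, cross, leaves] at hx hxS ⊢
    · exact ⟨⟨hx.1.symm.imp Eq.symm SimpleGraph.Adj.symm, hxS⟩, hx.2⟩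
    · obtain rfl := hx
      exact ⟨rfl, l, .rfl⟩
  have hleaves : leaves.ncard = B - G.degree u + 1 := by
    rw [Set.ncard_range_of_injective fun _ _ h => by simpa using h, Nat.card_eq_fintype_card,
      Fintype.card_fin]
  calc _ ≤ (cross ∪ leaves).ncard := Set.ncard_le_ncard hsub
    _ ≤ G.degree u + (B - G.degree u + 1) :=
      (Set.ncard_union_le _ _).trans <| add_le_add ((Set.ncard_image_le (Set.toFinite _)).trans
        (SimpleGraph.ncard_insert_neighborSet_diff_le hS)) hleaves.le
    _ = B + 1 := by omega

end Gadget

theorem stmt_14_general {V : Type*} [Fintype V] (G : SimpleGraph V)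
    [DecidableRel G.Adj] (B k : ℕ)
    (hdeg : ∀ v : V, G.degree v ≤ B)
    (ι : V → V → Fin (B + 2))
    (S : Finset V) (hS : ∀ v : V, ∃ u ∈ S, u = v ∨ G.Adj u v) (hSk : S.card ≤ k) :
    ∃ C : Set (GadgetVert V B (fun v => G.degree v)),
      IsCapacitatedVertexCover (gadgetGraph G B (fun v => G.degree v) ι)
        (gadgetCap G B (fun v => G.degree v) ι) C ∧
      C.ncard ≤ Fintype.card V * (B + 2) + k := by
  refine ⟨choiceCover S ∪ dominationCenters, ?_, ?_⟩
  · refine isCapacitatedVertexCover_union _ _ _ _ (fun _ _ => gadgetGraph_adj_mem_cover) ?_ ?_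
    · rintro (x | x) hx
      · exact (gadgetCap_inl x).ge
      · exact absurd hx inr_notMem_choiceCover
    · rintro _ ⟨u, rfl⟩
      exact ncard_adj_notMem_choiceCover_le (hdeg u) (hS u)
  · calc _ ≤ (choiceCover (S : Set V)).ncard + dominationCenters.ncard := Set.ncard_union_le _ _
      _ ≤ Fintype.card V * (B + 1) + S.card + Fintype.card V := by
        rw [ncard_dominationCenters, ← Set.ncard_coe_finset, ← Nat.card_eq_fintype_card]
        exact Nat.add_le_add_right (ncard_choiceCover_le _) _
      _ ≤ Fintype.card V * (B + 2) + k := by linarith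

/-- If G (finite, n vertices, maximum degree ≤ B) has a dominating set of
size at most k, then the gadget graph G′ with the capacities above has a capacitated vertex
cover of size at most n(B+2) + k. -/
theorem stmt_14 {V : Type*} [Fintype V] [DecidableEq V] (G : SimpleGraph V)
    [DecidableRel G.Adj] (B k : ℕ) (hB : 0 < B) (hk : 0 < k)
    (hdeg : ∀ v : V, G.degree v ≤ B)
    (ι : V → V → Fin (B + 2))
    (hι : ∀ v : V, Set.InjOn (ι v) {u : V | G.Adj v u ∨ u = v})
    (S : Finset V) (hS : ∀ v : V, ∃ u ∈ S, u = v ∨ G.Adj u v) (hSk : S.card ≤ k) :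
    ∃ C : Set (GadgetVert V B (fun v => G.degree v)),
      IsCapacitatedVertexCover (gadgetGraph G B (fun v => G.degree v) ι)
        (gadgetCap G B (fun v => G.degree v) ι) C ∧
      C.ncard ≤ Fintype.card V * (B + 2) + k :=
  stmt_14_general G B k hdeg ι S hS hSk
end
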